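/- arXiv:0705.0965 — 7 statements merged into one kernel-verified Lean document; each statement's English description precedes it below -/
import Mathlib

section
/- Define Γ_d(k) = ∏_{i=d-k}^{d-1} γ_{i+1}^{1/(2i)}, where γ_n denotes Hermite's constant in dimension n. Assuming only the bound γ_n ≤ (n+4)/4 for all n ≥ 2, one has Γ_d(k) ≤ (√d)^{log(d/(d-k))} for all integers 1 ≤ k < d. -/
open Finset Real

/-!
With `γ (i + 1) ≤ (i + 5) / 4`, the `i`-th factor is at most `(√d) ^ log ((i + 1) / i)`, and these exponents
telescope to `log (d / (d - k))`. The factor bound reduces, via `log ((i + 1) / i) ≥ 1 / (i + 1)`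
and `log (i + 1) ≤ log d`, to `n log ((n + 4) / 4) ≤ (n - 1) log n` for `n = i + 1 ≥ 3`; this holds
because `log ((n + 4) / 4) - log n = log (1 / 4 + 1 / n) ≤ -5 / 12` while `log n / n ≤ 1 / e < 5 / 12`.
The case `i = 1` is the numerical inequality `log (3 / 2) ≤ (log 2) ^ 2`.
-/

lemma log_le_five_twelfths_mul {x : ℝ} (hx : 0 < x) : log x ≤ 5 / 12 * x := by
  have h := log_le_sub_one_of_pos (div_pos hx (exp_pos 1))
  rw [log_div hx.ne' (exp_pos 1).ne', log_exp] at h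
  have he : 12 / 5 < exp 1 := lt_trans (by norm_num) exp_one_gt_d9
  have : x / exp 1 ≤ 5 / 12 * x := by
    rw [div_le_iff₀ (exp_pos 1)]
    nlinarith
  linarith

lemma log_add_four_div_four_le {x : ℝ} (hx : 3 ≤ x) :
    log ((x + 4) / 4) ≤ (1 - x⁻¹) * log x := by
  have hx0 : 0 < x := by linarith
  have hsplit : (x + 4) / 4 = x * (1 / 4 + x⁻¹) := by field_simp
  have hsmall : log (1 / 4 + x⁻¹) ≤ -5 / 12 := by
    have hinv : x⁻¹ ≤ 1 / 3 := by rw [inv_le_comm₀ hx0 (by norm_num)]; linarith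
    linarith [log_le_sub_one_of_pos (show 0 < 1 / 4 + x⁻¹ by positivity)]
  have hlog : x⁻¹ * log x ≤ 5 / 12 := by
    rw [inv_mul_le_iff₀ hx0]
    linarith [log_le_five_twelfths_mul hx0]
  rw [hsplit, log_mul hx0.ne' (by positivity)]
  linarith

lemma log_three_halves_le_log_two_sq : log (3 / 2) ≤ log 2 * log 2 := by
  have h : log ((3 / 2 : ℝ) ^ 5) ≤ log ((2 : ℝ) ^ 3) := log_le_log (by norm_num) (by norm_num)
  rw [log_pow, log_pow] at h
  nlinarith [log_two_gt_d9]

lemma log_add_five_div_four_le {i : ℕ} (hi : 1 ≤ i) :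
    log (((i : ℝ) + 5) / 4) ≤ i * log (((i : ℝ) + 1) / i) * log ((i : ℝ) + 1) := by
  obtain rfl | hi2 := hi.eq_or_lt
  · norm_num [log_three_halves_le_log_two_sq]
  have hx : (2 : ℝ) ≤ i := by exact_mod_cast hi2
  have hpos : (0 : ℝ) < i := by linarith
  have hlog_succ : 1 - ((i : ℝ) + 1)⁻¹ ≤ i * log (((i : ℝ) + 1) / i) := by
    have h := one_sub_inv_le_log_of_pos (show (0 : ℝ) < ((i : ℝ) + 1) / i by positivity)
    have heq : (1 : ℝ) - ((i : ℝ) + 1)⁻¹ = i * (1 - (((i : ℝ) + 1) / i)⁻¹) := by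
      field_simp
      ring
    rw [heq]
    exact mul_le_mul_of_nonneg_left h hpos.le
  calc log (((i : ℝ) + 5) / 4) = log (((i : ℝ) + 1 + 4) / 4) := by ring_nf
    _ ≤ (1 - ((i : ℝ) + 1)⁻¹) * log ((i : ℝ) + 1) := log_add_four_div_four_le (by linarith)
    _ ≤ i * log (((i : ℝ) + 1) / i) * log ((i : ℝ) + 1) :=
      mul_le_mul_of_nonneg_right hlog_succ (log_nonneg (by linarith))

lemma add_five_div_four_rpow_le_sqrt_rpow {i : ℕ} {D : ℝ} (hi : 1 ≤ i) (hD : (i : ℝ) + 1 ≤ D) :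
    (((i : ℝ) + 5) / 4) ^ ((1 : ℝ) / (2 * i)) ≤ √D ^ log (((i : ℝ) + 1) / i) := by
  have hpos : (0 : ℝ) < i := by exact_mod_cast hi
  have hD0 : 0 < D := by linarith
  rw [← log_le_log_iff (by positivity) (by positivity), log_rpow (by positivity),
    log_rpow (sqrt_pos.2 hD0), log_sqrt hD0.le]
  have hstep : log ((i : ℝ) + 1) ≤ log D := log_le_log (by linarith) hD
  have hratio : 0 ≤ log (((i : ℝ) + 1) / i) :=
    log_nonneg (by rw [le_div_iff₀ hpos]; linarith)
  have hkey := log_add_five_div_four_le hi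
  rw [div_mul_eq_mul_div, one_mul, div_le_iff₀ (by positivity)]
  nlinarith [mul_le_mul_of_nonneg_left hstep (mul_nonneg hpos.le hratio)]

lemma sum_Ico_log_succ_div {a b : ℕ} (ha : 0 < a) (hab : a ≤ b) :
    ∑ i ∈ Ico a b, log (((i : ℝ) + 1) / i) = log ((b : ℝ) / a) := by
  have ha' : (0 : ℝ) < a := by exact_mod_cast ha
  induction b, hab using Nat.le_induction with
  | base => simp [div_self ha'.ne']
  | succ b hab ih =>
    have hb : (0 : ℝ) < b := by exact_mod_cast ha.trans_le hab
    rw [sum_Ico_succ_top hab, ih, ← log_mul (by positivity) (by positivity)]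
    push_cast
    congr 1
    field_simp

theorem Gamma_d_k_bound_general (γ : ℕ → ℝ) (hγ : ∀ n, 2 ≤ n → 1 ≤ γ n ∧ γ n ≤ (n + 4) / 4)
    (d k : ℕ) (hk : k < d) :
    ∏ i ∈ Finset.Icc (d - k) (d - 1), γ (i + 1) ^ ((1 : ℝ) / (2 * i)) ≤
      Real.sqrt d ^ Real.log ((d : ℝ) / ((d : ℝ) - (k : ℝ))) := by
  have hrange : ∀ i ∈ Icc (d - k) (d - 1), 1 ≤ i ∧ i + 1 ≤ d := fun i hi => by
    rw [mem_Icc] at hi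
    omega
  calc ∏ i ∈ Icc (d - k) (d - 1), γ (i + 1) ^ ((1 : ℝ) / (2 * i))
      ≤ ∏ i ∈ Icc (d - k) (d - 1), (((i : ℝ) + 5) / 4) ^ ((1 : ℝ) / (2 * i)) := by
        refine prod_le_prod (fun i hi => ?_) (fun i hi => ?_) <;>
          obtain ⟨hγ1, hγ2⟩ := hγ (i + 1) (by linarith [(hrange i hi).1])
        · exact rpow_nonneg (by linarith) _
        · push_cast at hγ2
          exact rpow_le_rpow (by linarith) (by linarith) (by positivity)
    _ ≤ ∏ i ∈ Icc (d - k) (d - 1), √d ^ log (((i : ℝ) + 1) / i) :=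
        prod_le_prod (fun i _ => by positivity) fun i hi =>
          add_five_div_four_rpow_le_sqrt_rpow (hrange i hi).1 (by exact_mod_cast (hrange i hi).2)
    _ = √d ^ ∑ i ∈ Icc (d - k) (d - 1), log (((i : ℝ) + 1) / i) :=
        (rpow_sum_of_pos (sqrt_pos.2 (Nat.cast_pos.2 (Nat.zero_lt_of_lt hk))) _ _).symm
    _ = √d ^ log ((d : ℝ) / ((d : ℝ) - (k : ℝ))) := by
        rw [← Ico_add_one_right_eq_Icc, Nat.sub_add_cancel (by omega),
          sum_Ico_log_succ_div (by omega) (by omega), Nat.cast_sub hk.le]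

theorem Gamma_d_k_bound (γ : ℕ → ℝ) (hγ : ∀ n, 2 ≤ n → 1 ≤ γ n ∧ γ n ≤ (n + 4) / 4)
    (d k : ℕ) (hd : 2 ≤ d) (hk1 : 1 ≤ k) (hk : k < d) :
    ∏ i ∈ Finset.Icc (d - k) (d - 1), γ (i + 1) ^ ((1 : ℝ) / (2 * i)) ≤
      Real.sqrt d ^ Real.log ((d : ℝ) / ((d : ℝ) - (k : ℝ))) :=
  Gamma_d_k_bound_general γ hγ d k hk
end

section
/- The sequence n ↦ (n·log((n+4)/4))/(n-1), defined for integers n ≥ 2, is increasing. -/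
/-!
Write `L x = log ((x + 4) / 4)`. Cross-multiplying, `seqTerm x ≤ seqTerm (x + 1)` becomes
`L x ≤ (x ^ 2 - 1) (L (x + 1) - L x)`. From `log y ≤ y - 1` we get `L x ≤ x / 4`, and from
`1 - y⁻¹ ≤ log y` the increment `L (x + 1) - L x` is at least `1 / (x + 5)`; the inequality
`x / 4 ≤ (x ^ 2 - 1) / (x + 5)` holds for `x ≥ 3`. These bounds are too crude at `x = 2`;
the step from `2` to `3` is `(3 / 2) ^ 4 ≤ (7 / 4) ^ 3`.
-/

open Real

noncomputable def seqTerm (x : ℝ) : ℝ := x * log ((x + 4) / 4) / (x - 1)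

lemma one_div_add_one_le_log_add_one_sub_log {a : ℝ} (ha : 0 < a) :
    1 / (a + 1) ≤ log (a + 1) - log a := by
  have h := one_sub_inv_le_log_of_pos (show 0 < (a + 1) / a by positivity)
  rwa [inv_div, log_div (by positivity) ha.ne', one_sub_div (by positivity), add_sub_cancel_left]
    at h

lemma one_div_add_five_le_log_increment {x : ℝ} (hx : -4 < x) :
    1 / (x + 5) ≤ log ((x + 1 + 4) / 4) - log ((x + 4) / 4) := by
  have h := one_div_add_one_le_log_add_one_sub_log (show 0 < x + 4 by linarith)
  rw [log_div (by linarith) four_ne_zero, log_div (by linarith) four_ne_zero]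
  ring_nf at h ⊢
  linarith

lemma seqTerm_le_seqTerm_add_one {x : ℝ} (hx : 3 ≤ x) : seqTerm x ≤ seqTerm (x + 1) := by
  unfold seqTerm
  rw [div_le_div_iff₀ (by linarith) (by linarith)]
  have hL : log ((x + 4) / 4) ≤ x / 4 := by
    linarith [log_le_sub_one_of_pos (show 0 < (x + 4) / 4 by linarith)]
  have hinc := one_div_add_five_le_log_increment (show -4 < x by linarith)
  have hpoly : x / 4 ≤ (x ^ 2 - 1) * (1 / (x + 5)) := by
    rw [mul_one_div, le_div_iff₀ (by linarith)]
    nlinarith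
  nlinarith [mul_le_mul_of_nonneg_left hinc (show (0 : ℝ) ≤ x ^ 2 - 1 by nlinarith)]

lemma seqTerm_two_le_seqTerm_three : seqTerm 2 ≤ seqTerm 3 := by
  have h : log ((3 / 2 : ℝ) ^ 4) ≤ log ((7 / 4 : ℝ) ^ 3) := log_le_log (by norm_num) (by norm_num)
  rw [log_pow, log_pow] at h
  unfold seqTerm
  norm_num
  linarith

lemma seqTerm_natCast_le_succ {n : ℕ} (hn : 2 ≤ n) : seqTerm n ≤ seqTerm (n + 1 : ℕ) := by
  obtain rfl | h3 := hn.eq_or_lt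
  · norm_num
    exact seqTerm_two_le_seqTerm_three
  · push_cast
    exact seqTerm_le_seqTerm_add_one (by exact_mod_cast h3)

theorem seq_increasing (m n : ℕ) (hm : 2 ≤ m) (hmn : m ≤ n) :
    ((m : ℝ) * Real.log (((m : ℝ) + 4) / 4)) / ((m : ℝ) - 1) ≤
      ((n : ℝ) * Real.log (((n : ℝ) + 4) / 4)) / ((n : ℝ) - 1) :=
  monotoneOn_nat_Ici_of_le_succ (f := fun k : ℕ => seqTerm k)
    (fun _ hk => seqTerm_natCast_le_succ hk) hm (hm.trans hmn) hmn
end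

section
/- Let (b_1,…,b_d) be an HKZ-reduced basis of a lattice L ⊂ ℝ^n of dimension d ≥ 2, with Gram–Schmidt vectors b_i^*. For I ⊆ {1,…,d} define π_I = (∏_{i∈I} ‖b_i^*‖)^{1/|I|}, and for 1 ≤ k < d define Γ_d(k) = ∏_{i=d-k}^{d-1} γ_{i+1}^{1/(2i)} where γ_n is Hermite's constant. Then for all integers 0 ≤ k ≤ d-1: π_{[1,k]} ≤ (Γ_d(k))^{d/k} · π_{[k+1,d]} (for k ≥ 1). -/
open Finset

/-!
After taking logarithms everything is linear. Write `S i` for the mean of `log ‖b_j^*‖` over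
`j ∈ [i, d]`, i.e. `log π_{[i,d]}`. Since `d - i + 1` times `S i` is `log ‖b_i^*‖` plus `d - i`
times `S (i + 1)`, the HKZ inequality at `i` is equivalent to
`S i ≤ log γ_{d-i+1} / (2 (d - i)) + S (i + 1)`. Chaining these for `i = 1, …, k` gives
`log π_{[1,d]} ≤ log Γ_d(k) + log π_{[k+1,d]}`, and `d log π_{[1,d]} = k log π_{[1,k]} +
(d - k) log π_{[k+1,d]}` turns this into the claim.
-/

noncomputable def tailMean (L : ℕ → ℝ) (d i : ℕ) : ℝ :=
  (∑ j ∈ Icc i d, L j) / ((d : ℝ) - i + 1)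

theorem add_div_le_div_sub_one_of_le {x s g m : ℝ} (hm : 1 < m) (h : x ≤ g + (x + s) / m) :
    (x + s) / m ≤ (g + s) / (m - 1) := by
  have hm0 : 0 < m := by linarith
  rw [div_le_div_iff₀ hm0 (by linarith)]
  rw [← sub_le_iff_le_add', le_div_iff₀ hm0] at h
  nlinarith

theorem tailMean_le_of_le_add_tailMean {L : ℕ → ℝ} {d i : ℕ} {g : ℝ} (hi : i < d)
    (h : L i ≤ g + tailMean L d i) :
    tailMean L d i ≤ g / ((d : ℝ) - i) + tailMean L d (i + 1) := by
  have hdi : (i : ℝ) + 1 ≤ d := by exact_mod_cast hi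
  have hsplit : ∑ j ∈ Icc i d, L j = L i + ∑ j ∈ Icc (i + 1) d, L j := by
    rw [← add_sum_Ioc_eq_sum_Icc hi.le, Icc_add_one_left_eq_Ioc]
  unfold tailMean at h ⊢
  rw [hsplit] at h ⊢
  refine (add_div_le_div_sub_one_of_le (by linarith) h).trans_eq ?_
  push_cast
  rw [show (d : ℝ) - i + 1 - 1 = d - i by ring, show (d : ℝ) - (i + 1) + 1 = d - i by ring, add_div]

theorem tailMean_one_le_sum_add_tailMean {L g : ℕ → ℝ} {d : ℕ}
    (h : ∀ i, 1 ≤ i → i < d → L i ≤ g i + tailMean L d i) :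
    ∀ K, K < d → tailMean L d 1 ≤ ∑ i ∈ Icc 1 K, g i / ((d : ℝ) - i) + tailMean L d (K + 1)
  | 0, _ => by simp
  | K + 1, hK => by
    calc tailMean L d 1
        ≤ ∑ i ∈ Icc 1 K, g i / ((d : ℝ) - i) + tailMean L d (K + 1) :=
          tailMean_one_le_sum_add_tailMean h K (by omega)
      _ ≤ ∑ i ∈ Icc 1 K, g i / ((d : ℝ) - i)
            + (g (K + 1) / ((d : ℝ) - (K + 1 : ℕ)) + tailMean L d (K + 1 + 1)) := by
          gcongr
          exact tailMean_le_of_le_add_tailMean hK (h _ (by omega) hK)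
      _ = _ := by rw [sum_Icc_succ_top (by omega)]; ring

theorem div_le_of_add_div_le {a c G k d : ℝ} (hk : 0 < k) (hkd : k < d)
    (h : (a + c) / d ≤ G + c / (d - k)) : a / k ≤ d / k * G + c / (d - k) := by
  have hdk : 0 < d - k := by linarith
  rw [div_le_iff₀ (hk.trans hkd)] at h
  rw [div_le_iff₀ hk]
  have e : (d / k * G + c / (d - k)) * k = G * d + c / (d - k) * d - c := by
    field_simp
    ring
  linarith

theorem sum_div_le_of_le_add_tailMean {L g : ℕ → ℝ} {d k : ℕ}
    (h : ∀ i, 1 ≤ i → i < d → L i ≤ g i + tailMean L d i) (hk : 1 ≤ k) (hkd : k < d) :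
    (∑ i ∈ Icc 1 k, L i) / k ≤
      d / k * ∑ i ∈ Icc 1 k, g i / ((d : ℝ) - i) + (∑ i ∈ Icc (k + 1) d, L i) / ((d : ℝ) - k) := by
  have hmean := tailMean_one_le_sum_add_tailMean h k hkd
  have hsplit : ∑ j ∈ Icc 1 d, L j = ∑ j ∈ Icc 1 k, L j + ∑ j ∈ Icc (k + 1) d, L j := by
    simp only [← Ico_add_one_right_eq_Icc]
    exact (sum_Ico_consecutive _ (by omega) (by omega)).symm
  rw [tailMean, tailMean, hsplit, Nat.cast_one, sub_add_cancel, Nat.cast_succ,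
    sub_add_eq_sub_sub, sub_add_cancel] at hmean
  exact div_le_of_add_div_le (by exact_mod_cast hk) (by exact_mod_cast hkd) hmean

theorem log_prod_rpow {ι : Type*} {s : Finset ι} {f : ι → ℝ} (hf : ∀ i ∈ s, 0 < f i) (r : ℝ) :
    Real.log ((∏ i ∈ s, f i) ^ r) = r * ∑ i ∈ s, Real.log (f i) := by
  rw [Real.log_rpow (prod_pos hf), Real.log_prod fun i hi => (hf i hi).ne']

theorem sum_Icc_one_reflect {M : Type*} [AddCommMonoid M] (f : ℕ → M) {k d : ℕ} (hd : 0 < d)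
    (hk : k ≤ d) : ∑ i ∈ Icc 1 k, f (d - i) = ∑ j ∈ Icc (d - k) (d - 1), f j := by
  refine sum_nbij' (d - ·) (d - ·) ?_ ?_ ?_ ?_ fun _ _ => rfl <;> intro i hi <;>
    simp only [mem_Icc] at hi ⊢ <;> omega

theorem pi_first_le_general (d : ℕ) (B : ℕ → ℝ)
    (hBpos : ∀ i, 1 ≤ i → i ≤ d → 0 < B i)
    (γ : ℕ → ℝ) (hγ : ∀ n, 1 ≤ γ n)
    (hHKZ : ∀ i, 1 ≤ i → i ≤ d →
      B i ≤ Real.sqrt (γ (d - i + 1)) *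
        (∏ j ∈ Finset.Icc i d, B j) ^ ((1 : ℝ) / ((d : ℝ) - (i : ℝ) + 1)))
    (k : ℕ) (hk1 : 1 ≤ k) (hk : k ≤ d - 1) :
    (∏ i ∈ Finset.Icc 1 k, B i) ^ ((1 : ℝ) / (k : ℝ)) ≤
      (∏ i ∈ Finset.Icc (d - k) (d - 1), γ (i + 1) ^ ((1 : ℝ) / (2 * i))) ^ ((d : ℝ) / (k : ℝ)) *
        (∏ i ∈ Finset.Icc (k + 1) d, B i) ^ ((1 : ℝ) / ((d : ℝ) - (k : ℝ))) := by
  have hkd : k < d := by omega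
  have hγpos n : 0 < γ n := one_pos.trans_le (hγ n)
  have hBpos' {a b : ℕ} (ha : 1 ≤ a) (hb : b ≤ d) : ∀ i ∈ Icc a b, 0 < B i := fun i hi =>
    hBpos i (ha.trans (mem_Icc.1 hi).1) ((mem_Icc.1 hi).2.trans hb)
  have hlog : ∀ i, 1 ≤ i → i < d → Real.log (B i) ≤
      Real.log (γ (d - i + 1)) / 2 + tailMean (fun j => Real.log (B j)) d i := by
    intro i hi hid
    have := Real.log_le_log (hBpos i hi hid.le) (hHKZ i hi hid.le)
    rwa [Real.log_mul (Real.sqrt_pos.2 (hγpos _)).ne'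
      (Real.rpow_pos_of_pos (prod_pos (hBpos' hi le_rfl)) _).ne', Real.log_sqrt (hγpos _).le,
      log_prod_rpow (hBpos' hi le_rfl), one_div_mul_eq_div] at this
  have hreflect : ∑ i ∈ Icc 1 k, Real.log (γ (d - i + 1)) / 2 / ((d : ℝ) - i) =
      ∑ j ∈ Icc (d - k) (d - 1), Real.log (γ (j + 1) ^ ((1 : ℝ) / (2 * j))) := by
    rw [← sum_Icc_one_reflect _ (by omega) hkd.le]
    refine sum_congr rfl fun i hi => ?_
    rw [Real.log_rpow (hγpos _), Nat.cast_sub ((mem_Icc.1 hi).2.trans hkd.le)]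
    field_simp
  have hΓpos : 0 < ∏ i ∈ Icc (d - k) (d - 1), γ (i + 1) ^ ((1 : ℝ) / (2 * i)) :=
    prod_pos fun i _ => Real.rpow_pos_of_pos (hγpos _) _
  have hpos₁ := prod_pos (hBpos' le_rfl hkd.le)
  have hpos₂ := prod_pos (hBpos' (by omega : 1 ≤ k + 1) le_rfl)
  rw [← Real.log_le_log_iff (by positivity) (by positivity),
    Real.log_mul (by positivity) (by positivity), Real.log_rpow hΓpos,
    Real.log_prod fun i _ => (Real.rpow_pos_of_pos (hγpos _) _).ne',
    log_prod_rpow (hBpos' le_rfl hkd.le), log_prod_rpow (hBpos' (by omega) le_rfl), ← hreflect]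
  simpa only [one_div_mul_eq_div] using sum_div_le_of_le_add_tailMean hlog hk1 hkd

/-- Averaged Schnorr bound, first inequality of Lemma `mschnorr`.
`B i` stands for `‖bᵢ*‖`, the norms of the Gram–Schmidt vectors of an
HKZ-reduced basis; the only property of HKZ-reduction used is the stated
Minkowski-type inequality with Hermite's constants `γ`. -/
theorem pi_first_le (d : ℕ) (hd : 2 ≤ d) (B : ℕ → ℝ)
    (hBpos : ∀ i, 1 ≤ i → i ≤ d → 0 < B i)
    (γ : ℕ → ℝ) (hγ : ∀ n, 1 ≤ γ n)
    (hHKZ : ∀ i, 1 ≤ i → i ≤ d →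
      B i ≤ Real.sqrt (γ (d - i + 1)) *
        (∏ j ∈ Finset.Icc i d, B j) ^ ((1 : ℝ) / ((d : ℝ) - (i : ℝ) + 1)))
    (k : ℕ) (hk1 : 1 ≤ k) (hk : k ≤ d - 1) :
    (∏ i ∈ Finset.Icc 1 k, B i) ^ ((1 : ℝ) / (k : ℝ)) ≤
      (∏ i ∈ Finset.Icc (d - k) (d - 1), γ (i + 1) ^ ((1 : ℝ) / (2 * i))) ^ ((d : ℝ) / (k : ℝ)) *
        (∏ i ∈ Finset.Icc (k + 1) d, B i) ^ ((1 : ℝ) / ((d : ℝ) - (k : ℝ))) :=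
  pi_first_le_general d B hBpos γ hγ hHKZ k hk1 hk
end

section
/- Let d ≥ 2 be an integer and let 1 ≤ x_1 < x_2 < d be reals with ⌊x_1⌋ < ⌊x_2⌋. Set λ_i = (d - ⌊x_i⌋ + 1)(1 - x_i + ⌊x_i⌋)/(d - x_i + 1) for i = 1,2, and suppose λ_1 ≤ λ_2. Then E(x_1,x_2) := λ_1·(d-⌊x_1⌋+1)/(d-⌊x_2⌋+1) + (λ_2-λ_1)·(d-⌊x_1⌋)/(d-⌊x_2⌋+1) + (1-λ_2)·(d-⌊x_1⌋)/(d-⌊x_2⌋) ≤ (d - x_1)/(d - x_2). -/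
/-!
Write `A = d - ⌊x₁⌋`, `B = d - ⌊x₂⌋`, `f = fract x₁`, `g = fract x₂`, so `A ≥ B + 1 ≥ 2`,
`d - x₁ = A - f` and `d - x₂ = B - g`. Since `λ₂ = (B+1)(1-g)/(B+1-g)`, the expression
collapses to `E = λ₁/(B+1) + A/(B+1-g)`, and the claim becomes a polynomial inequality whose
defect, with `a = A + 1` and `u = B + 1 - g`, is the sum of the nonnegative terms
`u((a-u-1)(a+1-2f) + u(1-f)² + (1-f))` and `g(a-f)(a-1-fu)`.
-/

lemma weighted_ratio_sum_eq {A B g l₁ l₂ : ℝ} (hB : 0 < B) (hg : g < 1)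
    (hl₂ : l₂ = (B + 1) * (1 - g) / (B + 1 - g)) :
    l₁ * ((A + 1) / (B + 1)) + (l₂ - l₁) * (A / (B + 1)) + (1 - l₂) * (A / B) =
      l₁ / (B + 1) + A / (B + 1 - g) := by
  have hBg : B + 1 - g ≠ 0 := by linarith
  subst hl₂
  field_simp
  ring

lemma frac_weight_div_add_le {A B f g : ℝ} (hB : 1 ≤ B) (hAB : B + 1 ≤ A)
    (hf0 : 0 ≤ f) (hf1 : f < 1) (hg0 : 0 ≤ g) (hg1 : g < 1) :
    (A + 1) * (1 - f) / (A + 1 - f) / (B + 1) + A / (B + 1 - g) ≤ (A - f) / (B - g) := by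
  set a := A + 1
  set u := B + 1 - g
  have hu : 1 < u := by linarith
  have hau : 0 ≤ a - 1 - f * u := by nlinarith
  have hdefect : a * (1 - f) * (u - 1) * u ≤ (a - f) * (u + g) * (a - 1 - f * u) := by
    nlinarith [mul_nonneg (by linarith : (0:ℝ) ≤ u)
        (mul_nonneg (by linarith : 0 ≤ a - u - 1) (by linarith : 0 ≤ a + 1 - 2 * f)),
      mul_nonneg (by linarith : (0:ℝ) ≤ u) (mul_nonneg (by linarith : (0:ℝ) ≤ u)
        (sq_nonneg (1 - f))),
      mul_nonneg (by linarith : (0:ℝ) ≤ u) (by linarith : 0 ≤ 1 - f),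
      mul_nonneg hg0 (mul_nonneg (by linarith : 0 ≤ a - f) hau)]
  have ha : 0 < a - f := by linarith
  rw [div_div, div_add_div _ _ (by positivity) (by positivity),
    div_le_div_iff₀ (by positivity) (by linarith)]
  rw [show B + 1 = u + g by ring, show B - g = u - 1 by ring, show A = a - 1 by ring]
  nlinarith [hdefect]

theorem E_le_ratio_general (d : ℕ) (x₁ x₂ : ℝ)
    (h2 : x₂ < d) (hfl : ⌊x₁⌋ < ⌊x₂⌋)
    (l₁ l₂ : ℝ)
    (hl₁ : l₁ = ((d : ℝ) - (⌊x₁⌋ : ℝ) + 1) * (1 - x₁ + (⌊x₁⌋ : ℝ)) / ((d : ℝ) - x₁ + 1))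
    (hl₂ : l₂ = ((d : ℝ) - (⌊x₂⌋ : ℝ) + 1) * (1 - x₂ + (⌊x₂⌋ : ℝ)) / ((d : ℝ) - x₂ + 1)) :
    l₁ * (((d : ℝ) - (⌊x₁⌋ : ℝ) + 1) / ((d : ℝ) - (⌊x₂⌋ : ℝ) + 1)) +
      (l₂ - l₁) * (((d : ℝ) - (⌊x₁⌋ : ℝ)) / ((d : ℝ) - (⌊x₂⌋ : ℝ) + 1)) +
      (1 - l₂) * (((d : ℝ) - (⌊x₁⌋ : ℝ)) / ((d : ℝ) - (⌊x₂⌋ : ℝ))) ≤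
    ((d : ℝ) - x₁) / ((d : ℝ) - x₂) := by
  have hfloor₂ : (⌊x₂⌋ : ℝ) + 1 ≤ d := by
    exact_mod_cast Int.floor_lt.mpr (by exact_mod_cast h2)
  have hfloor₁₂ : (⌊x₁⌋ : ℝ) + 1 ≤ ⌊x₂⌋ := by exact_mod_cast hfl
  rw [weighted_ratio_sum_eq (g := Int.fract x₂) (by linarith) (Int.fract_lt_one x₂)
    (by rw [hl₂, Int.fract]; congr 1 <;> ring), hl₁]
  convert frac_weight_div_add_le (by linarith) (by linarith : (d - ⌊x₂⌋ : ℝ) + 1 ≤ d - ⌊x₁⌋)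
    (Int.fract_nonneg x₁) (Int.fract_lt_one x₁) (Int.fract_nonneg x₂) (Int.fract_lt_one x₂)
    using 2 <;> simp only [Int.fract] <;> ring

theorem E_le_ratio (d : ℕ) (hd : 2 ≤ d) (x₁ x₂ : ℝ)
    (h1 : 1 ≤ x₁) (h12 : x₁ < x₂) (h2 : x₂ < d) (hfl : ⌊x₁⌋ < ⌊x₂⌋)
    (l₁ l₂ : ℝ)
    (hl₁ : l₁ = ((d : ℝ) - (⌊x₁⌋ : ℝ) + 1) * (1 - x₁ + (⌊x₁⌋ : ℝ)) / ((d : ℝ) - x₁ + 1))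
    (hl₂ : l₂ = ((d : ℝ) - (⌊x₂⌋ : ℝ) + 1) * (1 - x₂ + (⌊x₂⌋ : ℝ)) / ((d : ℝ) - x₂ + 1))
    (hle : l₁ ≤ l₂) :
    l₁ * (((d : ℝ) - (⌊x₁⌋ : ℝ) + 1) / ((d : ℝ) - (⌊x₂⌋ : ℝ) + 1)) +
      (l₂ - l₁) * (((d : ℝ) - (⌊x₁⌋ : ℝ)) / ((d : ℝ) - (⌊x₂⌋ : ℝ) + 1)) +
      (1 - l₂) * (((d : ℝ) - (⌊x₁⌋ : ℝ)) / ((d : ℝ) - (⌊x₂⌋ : ℝ))) ≤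
    ((d : ℝ) - x₁) / ((d : ℝ) - x₂) :=
  E_le_ratio_general d x₁ x₂ h2 hfl l₁ l₂ hl₁ hl₂
end

section
/- Let (b_1,…,b_d) be an HKZ-reduced basis of a lattice of dimension d ≥ 2. For a real a and integer b with 1 ≤ a < b ≤ d, define tilde-π_{[a,b]} = (‖b_{⌊a⌋}^*‖^{1-a+⌊a⌋} · ∏_{i=⌊a⌋+1}^{b} ‖b_i^*‖)^{1/(b+1-a)}. Then for reals 1 ≤ x_1 < x_2 < d: tilde-π_{[x_2,d]} ≥ (√d)^{log((d-x_2)/(d-x_1))} · tilde-π_{[x_1,d]}. -/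
/-!
After taking logarithms the claim says that `a ↦ log π̃_{[a,d]} - (log d / 2) · log (d - a)` is
nondecreasing on `[1, d)`. On each `[k, k + 1]`, `log π̃_{[a,d]}` has the form
`log ‖b_k^*‖ - D_k / (d + 1 - a)`, and the HKZ inequality in logarithmic form,
`D_k ≤ (d - k + 1) · log √((d - k + 5) / 4) ≤ (d - k + 1) · log √d`, makes the derivative
nonnegative there; the pieces agree at the integers.
-/

open Finset Real Set

theorem monotoneOn_of_monotoneOn_Icc_floor {f : ℝ → ℝ} {s : Set ℝ} (hs : s.OrdConnected)
    (hs₀ : ∀ x ∈ s, 0 ≤ x)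
    (hf : ∀ x ∈ s, MonotoneOn f (Icc (⌊x⌋₊ : ℝ) (⌊x⌋₊ + 1) ∩ s)) : MonotoneOn f s := by
  have piece : ∀ x ∈ s, ∀ y ∈ s, x ≤ y → y ≤ ⌊x⌋₊ + 1 → f x ≤ f y := fun x hx y hy hxy hy₁ ↦
    hf x hx ⟨⟨Nat.floor_le (hs₀ x hx), (Nat.lt_floor_add_one x).le⟩, hx⟩
      ⟨⟨(Nat.floor_le (hs₀ x hx)).trans hxy, hy₁⟩, hy⟩ hxy
  suffices key : ∀ n : ℕ, ∀ x ∈ s, ∀ y ∈ s, x ≤ y → ⌊y⌋₊ ≤ ⌊x⌋₊ + n → f x ≤ f y from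
    fun x hx y hy hxy ↦ key (⌊y⌋₊ - ⌊x⌋₊) x hx y hy hxy (by omega)
  intro n
  induction n with
  | zero =>
    intro x hx y hy hxy hfloor
    have : (⌊y⌋₊ : ℝ) ≤ ⌊x⌋₊ := by exact_mod_cast hfloor
    exact piece x hx y hy hxy (by linarith [Nat.lt_floor_add_one y])
  | succ n ih =>
    intro x hx y hy hxy hfloor
    rcases le_or_gt y (⌊x⌋₊ + 1) with hy₁ | hy₁
    · exact piece x hx y hy hxy hy₁
    set z : ℝ := ⌊x⌋₊ + 1
    have hz : z ∈ s := hs.out hx hy ⟨(Nat.lt_floor_add_one x).le, hy₁.le⟩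
    have hfloor_z : ⌊z⌋₊ = ⌊x⌋₊ + 1 := by
      rw [Nat.floor_add_one (Nat.cast_nonneg _), Nat.floor_natCast]
    calc f x ≤ f z := piece x hx z hz (Nat.lt_floor_add_one x).le le_rfl
      _ ≤ f y := ih z hz y hy hy₁.le (by omega)

theorem monotoneOn_neg_div_sub_mul_log {d k D L : ℝ} (hL : 0 ≤ L) (hD : D ≤ (d - k + 1) * L) :
    MonotoneOn (fun a ↦ -(D / (d + 1 - a)) - L * log (d - a)) (Icc k (k + 1) ∩ Iio d) := by
  have hderiv : ∀ a < d, HasDerivAt (fun a ↦ -(D / (d + 1 - a)) - L * log (d - a))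
      (-(D / (d + 1 - a) ^ 2) + L / (d - a)) a := by
    intro a ha
    have hsub : ∀ c : ℝ, HasDerivAt (fun a ↦ c - a) (-1) a := fun c ↦ (hasDerivAt_id a).const_sub c
    have h₁ : d + 1 - a ≠ 0 := by linarith
    have h₂ : d - a ≠ 0 := by linarith
    exact (((hasDerivAt_const a D).div (hsub (d + 1)) h₁).neg.sub
      (((hsub d).log h₂).const_mul L)).congr_deriv (by field_simp; ring)
  refine monotoneOn_of_hasDerivWithinAt_nonneg ((convex_Icc _ _).inter (convex_Iio _))
    (fun a ha ↦ (hderiv a ha.2).continuousAt.continuousWithinAt)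
    (fun a ha ↦ (hderiv a (interior_subset ha).2).hasDerivWithinAt) fun a ha ↦ ?_
  rw [interior_inter, interior_Icc, interior_Iio] at ha
  obtain ⟨⟨hka, hak⟩, had : a < d⟩ := ha
  have hu : 0 < d - a := by linarith
  -- `D (d - a) ≤ (d - k + 1) (d - a) L ≤ (d - a + 2) (d - a) L ≤ (d - a + 1)² L`
  have key : D * (d - a) ≤ L * (d + 1 - a) ^ 2 := by
    nlinarith [mul_le_mul_of_nonneg_right hD hu.le, mul_nonneg hL hu.le]
  rw [neg_add_eq_sub, sub_nonneg, div_le_div_iff₀ (by nlinarith) hu]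
  linarith

theorem sub_sum_log_le_of_hkz {d k : ℕ} {B : ℕ → ℝ} (hd : 2 ≤ d) (hk : 1 ≤ k) (hkd : k ≤ d)
    (hB : ∀ i ∈ Finset.Icc k d, 0 < B i)
    (hHKZ : B k ≤ √(((d : ℝ) - k + 5) / 4) *
      (∏ j ∈ Finset.Icc k d, B j) ^ (1 / ((d : ℝ) - k + 1))) :
    (d - k) * log (B k) - ∑ i ∈ Finset.Icc (k + 1) d, log (B i) ≤ (d - k + 1) * (log d / 2) := by
  have hkd' : (k : ℝ) ≤ d := by exact_mod_cast hkd
  have hk' : (1 : ℝ) ≤ k := by exact_mod_cast hk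
  have hd' : (2 : ℝ) ≤ d := by exact_mod_cast hd
  set S := ∑ i ∈ Finset.Icc (k + 1) d, log (B i)
  have hlog_prod : log (∏ j ∈ Finset.Icc k d, B j) = log (B k) + S := by
    rw [log_prod fun i hi ↦ (hB i hi).ne', ← add_sum_Ioc_eq_sum_Icc hkd,
      ← Finset.Icc_add_one_left_eq_Ioc]
  have hlog : log (B k) ≤ log √(((d : ℝ) - k + 5) / 4) + (log (B k) + S) / (d - k + 1) := by
    have hprod := prod_pos hB
    have := log_le_log (hB k (left_mem_Icc.2 hkd)) hHKZ
    rwa [log_mul (by positivity) (by positivity), log_rpow hprod, hlog_prod, one_div_mul_eq_div]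
      at this
  have hsqrt : log √(((d : ℝ) - k + 5) / 4) ≤ log d / 2 := by
    rw [log_sqrt (by linarith)]
    gcongr
    linarith
  have hmul : (log (B k) - log d / 2) * (d - k + 1) ≤ log (B k) + S :=
    (le_div_iff₀ (by linarith)).1 (by linarith)
  linarith

noncomputable def pitilde (d : ℕ) (B : ℕ → ℝ) (a : ℝ) : ℝ :=
  (B ⌊a⌋₊ ^ (1 - a + (⌊a⌋₊ : ℝ)) * ∏ i ∈ Finset.Icc (⌊a⌋₊ + 1) d, B i) ^
    ((1 : ℝ) / ((d : ℝ) + 1 - a))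

/-- `log π̃_{[a,d]}` computed as if `⌊a⌋ = k`. -/
noncomputable def logPitildeFrom (d : ℕ) (B : ℕ → ℝ) (k : ℕ) (a : ℝ) : ℝ :=
  ((1 - a + k) * log (B k) + ∑ i ∈ Finset.Icc (k + 1) d, log (B i)) / (d + 1 - a)

section pitilde

variable {d : ℕ} {B : ℕ → ℝ} {a : ℝ}

theorem pitilde_pos (hB : ∀ i ∈ Finset.Icc ⌊a⌋₊ d, 0 < B i) (ha : ⌊a⌋₊ ≤ d) :
    0 < pitilde d B a :=
  rpow_pos_of_pos (mul_pos (rpow_pos_of_pos (hB _ (left_mem_Icc.2 ha)) _)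
    (prod_pos fun i hi ↦ hB i (Icc_subset_Icc_left (Nat.le_succ _) hi))) _

theorem log_pitilde (hB : ∀ i ∈ Finset.Icc ⌊a⌋₊ d, 0 < B i) (ha : ⌊a⌋₊ ≤ d) :
    log (pitilde d B a) = logPitildeFrom d B ⌊a⌋₊ a := by
  have hB₀ := hB _ (left_mem_Icc.2 ha)
  have hprod := prod_pos fun i hi ↦ hB i (Icc_subset_Icc_left (Nat.le_succ _) hi)
  rw [pitilde, logPitildeFrom, log_rpow (by positivity), log_mul (by positivity) hprod.ne',
    log_rpow hB₀, log_prod fun i hi ↦ (hB i (Icc_subset_Icc_left (Nat.le_succ _) hi)).ne',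
    one_div_mul_eq_div]

theorem logPitildeFrom_floor_eq {k : ℕ} (hk : k + 1 ≤ d) (ha : a ∈ Icc (k : ℝ) (k + 1)) :
    logPitildeFrom d B ⌊a⌋₊ a = logPitildeFrom d B k a := by
  rcases ha.2.lt_or_eq with ha₁ | rfl
  · rw [Nat.floor_eq_on_Ico k a ⟨ha.1, ha₁⟩]
  · rw [Nat.floor_add_one (Nat.cast_nonneg _), Nat.floor_natCast, logPitildeFrom, logPitildeFrom,
      ← add_sum_Ioc_eq_sum_Icc hk, ← Finset.Icc_add_one_left_eq_Ioc]
    push_cast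
    ring

theorem monotoneOn_logPitildeFrom_sub_mul_log {k : ℕ} (hd : 1 ≤ d)
    (hD : (d - k) * log (B k) - ∑ i ∈ Finset.Icc (k + 1) d, log (B i) ≤
      (d - k + 1) * (log d / 2)) :
    MonotoneOn (fun a ↦ logPitildeFrom d B k a - log d / 2 * log (d - a))
      (Icc (k : ℝ) (k + 1) ∩ Iio (d : ℝ)) := by
  have hL : 0 ≤ log d / 2 := div_nonneg (log_nonneg (by exact_mod_cast hd)) zero_le_two
  refine ((monotoneOn_neg_div_sub_mul_log hL hD).const_add (log (B k))).congr fun a ha ↦ ?_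
  have : (d : ℝ) + 1 - a ≠ 0 := by linarith [ha.2.out]
  simp only [logPitildeFrom]
  field_simp
  ring

end pitilde

/-- The real-parameter extension of the averaged Schnorr bound:
`π̃_{[x₂,d]} ≥ (√d)^(log((d-x₂)/(d-x₁))) · π̃_{[x₁,d]}`, where
`π̃_{[a,d]} = (B ⌊a⌋ ^ (1-a+⌊a⌋) · ∏_{i=⌊a⌋+1}^d B i)^(1/(d+1-a))` and
`B i = ‖bᵢ*‖` for an HKZ-reduced basis, of which we only use the stated
Minkowski-type inequality. -/
theorem pitilde_mono (d : ℕ) (hd : 2 ≤ d) (B : ℕ → ℝ)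
    (hBpos : ∀ i, 1 ≤ i → i ≤ d → 0 < B i)
    (hHKZ : ∀ i, 1 ≤ i → i ≤ d →
      B i ≤ Real.sqrt (((d : ℝ) - (i : ℝ) + 5) / 4) *
        (∏ j ∈ Finset.Icc i d, B j) ^ ((1 : ℝ) / ((d : ℝ) - (i : ℝ) + 1)))
    (x₁ x₂ : ℝ) (h1 : 1 ≤ x₁) (h12 : x₁ < x₂) (h2 : x₂ < d) :
    (B ⌊x₂⌋₊ ^ (1 - x₂ + (⌊x₂⌋₊ : ℝ)) * ∏ i ∈ Finset.Icc (⌊x₂⌋₊ + 1) d, B i) ^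
        ((1 : ℝ) / ((d : ℝ) + 1 - x₂)) ≥
      Real.sqrt d ^ Real.log (((d : ℝ) - x₂) / ((d : ℝ) - x₁)) *
        (B ⌊x₁⌋₊ ^ (1 - x₁ + (⌊x₁⌋₊ : ℝ)) * ∏ i ∈ Finset.Icc (⌊x₁⌋₊ + 1) d, B i) ^
          ((1 : ℝ) / ((d : ℝ) + 1 - x₁)) := by
  have hfloor : ∀ a ∈ Ico (1 : ℝ) d, 1 ≤ ⌊a⌋₊ ∧ ⌊a⌋₊ < d := fun a ha ↦
    ⟨Nat.le_floor (by exact_mod_cast ha.1), (Nat.floor_lt (by linarith [ha.1])).2 ha.2⟩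
  have hB : ∀ a ∈ Ico (1 : ℝ) d, ∀ i ∈ Finset.Icc ⌊a⌋₊ d, 0 < B i := fun a ha i hi ↦
    hBpos i ((hfloor a ha).1.trans (Finset.mem_Icc.1 hi).1) (Finset.mem_Icc.1 hi).2
  have hmono : MonotoneOn (fun a ↦ logPitildeFrom d B ⌊a⌋₊ a - log d / 2 * log (d - a))
      (Ico 1 d) := by
    refine monotoneOn_of_monotoneOn_Icc_floor ordConnected_Ico (fun a ha ↦ by linarith [ha.1])
      fun x hx ↦ ?_
    obtain ⟨hk, hkd⟩ := hfloor x hx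
    have hD := sub_sum_log_le_of_hkz hd hk hkd.le (hB x hx) (hHKZ _ hk hkd.le)
    refine ((monotoneOn_logPitildeFrom_sub_mul_log (by omega) hD).mono
      (inter_subset_inter_right _ Ico_subset_Iio_self)).congr fun a ha ↦ ?_
    rw [logPitildeFrom_floor_eq hkd ha.1]
  have hx₁ : x₁ ∈ Ico (1 : ℝ) d := ⟨h1, h12.trans h2⟩
  have hx₂ : x₂ ∈ Ico (1 : ℝ) d := ⟨h1.trans h12.le, h2⟩
  have key := hmono hx₁ hx₂ h12.le
  show pitilde d B x₂ ≥ √d ^ log ((d - x₂) / (d - x₁)) * pitilde d B x₁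
  have hsqrt : 0 < √(d : ℝ) := Real.sqrt_pos.2 (by exact_mod_cast (by omega : 0 < d))
  have hp₁ := pitilde_pos (hB _ hx₁) (hfloor _ hx₁).2.le
  have hp₂ := pitilde_pos (hB _ hx₂) (hfloor _ hx₂).2.le
  rw [ge_iff_le, ← log_le_log_iff (mul_pos (rpow_pos_of_pos hsqrt _) hp₁) hp₂,
    log_mul (rpow_pos_of_pos hsqrt _).ne' hp₁.ne', log_rpow hsqrt, log_sqrt (Nat.cast_nonneg d),
    log_div (by linarith) (by linarith), log_pitilde (hB _ hx₁) (hfloor _ hx₁).2.le,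
    log_pitilde (hB _ hx₂) (hfloor _ hx₂).2.le]
  linarith
end

section
/- Let (b_1,…,b_d) be a basis of a lattice L with Gram–Schmidt vectors b_i^* and coefficients μ_{j,k}, let A > 0, and fix 1 ≤ i ≤ d. Then the number of integer tuples (x_i,…,x_d) with ‖∑_{j=i}^{d} x_j b_j^{(i)}‖² ≤ A (where b_j^{(i)} is the projection of b_j orthogonally to span(b_1,…,b_{i-1})) is at most the number of integer tuples (x_i,…,x_d) with ∑_{j=i}^d x_j²·‖b_j^*‖² ≤ 4A. -/
/-!
Write `v = ∑ⱼ xⱼ bⱼ^{(i)} = ∑_{k ≥ i} cₖ bₖ*` with `cₖ = ∑ⱼ xⱼ μ_{j,k} = xₖ + ∑_{j>k} xⱼ μ_{j,k}`,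
so that `‖v‖² = ∑ₖ cₖ² ‖bₖ*‖²` by orthogonality. The map `x ↦ (round cₖ)ₖ` is injective because
the coefficient matrix is unitriangular (recover `xₖ` from the last coordinate down), and
`(round c)² ≤ 4c²`, so it sends the first set into the second, which is finite.
-/

open Finset

/-- Gram–Schmidt orthogonalisation of a finite family of vectors. -/
noncomputable def gso {d n : ℕ} (b : Fin d → EuclideanSpace ℝ (Fin n)) :
    Fin d → EuclideanSpace ℝ (Fin n) :=
  letI : WellFoundedLT (Fin d) := inferInstance
  InnerProductSpace.gramSchmidt ℝ b

/-- The Gram–Schmidt coefficients `μ_{j,k} = ⟪b_j, b_k*⟫ / ‖b_k*‖²`. -/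
noncomputable def gsoMu {d n : ℕ} (b : Fin d → EuclideanSpace ℝ (Fin n))
    (j k : Fin d) : ℝ :=
  (inner ℝ (gso b k) (b j) : ℝ) / ‖gso b k‖ ^ 2

section Round

variable {α : Type*} [Field α] [LinearOrder α] [IsStrictOrderedRing α] [FloorRing α]

theorem abs_round_le_two_mul_abs (c : α) : |(round c : α)| ≤ 2 * |c| := by
  rcases eq_or_ne (round c) 0 with h | h
  · simp [h]
  · have h_one : (1 : α) ≤ |(round c : α)| := by exact_mod_cast Int.one_le_abs h
    have h_half : |(round c : α)| - |c| ≤ 1 / 2 :=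
      (abs_sub_abs_le_abs_sub _ _).trans (abs_sub_comm (round c : α) c ▸ abs_sub_round c)
    linarith

theorem sq_round_le (c : α) : (round c : α) ^ 2 ≤ 4 * c ^ 2 :=
  calc (round c : α) ^ 2 = |(round c : α)| ^ 2 := (sq_abs _).symm
    _ ≤ (2 * |c|) ^ 2 := pow_le_pow_left₀ (abs_nonneg _) (abs_round_le_two_mul_abs c) 2
    _ = 4 * c ^ 2 := by rw [mul_pow, sq_abs]; norm_num

theorem injective_round_sum_mul_of_unitriangular {ι : Type*} [Fintype ι] [LinearOrder ι]
    (M : ι → ι → α) (h_diag : ∀ k, M k k = 1) (h_lt : ∀ j k, j < k → M j k = 0) :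
    Function.Injective fun (x : ι → ℤ) k => round (∑ j, (x j : α) * M j k) := by
  intro x x' h
  funext k
  induction k using WellFoundedGT.induction with
  | _ k ih =>
    have h_off_diag : ∑ j ∈ univ.erase k, (x j : α) * M j k =
        ∑ j ∈ univ.erase k, (x' j : α) * M j k := by
      refine sum_congr rfl fun j hj => ?_
      rcases lt_or_gt_of_ne (ne_of_mem_erase hj) with hjk | hkj
      · simp [h_lt j k hjk]
      · rw [ih j hkj]
    have hk := congrFun h k
    simp only at hk
    rw [← add_sum_erase _ _ (mem_univ k), ← add_sum_erase _ _ (mem_univ k), h_diag, mul_one,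
      mul_one, h_off_diag, round_intCast_add, round_intCast_add] at hk
    exact add_right_cancel hk

end Round

theorem abs_le_ceil_of_sq_mul_le {z : ℤ} {w C : ℝ} (hw : 0 < w) (h : (z : ℝ) ^ 2 * w ≤ C) :
    |z| ≤ ⌈C / w⌉ := by
  have h_sq : (z : ℝ) ^ 2 ≤ C / w := (le_div_iff₀ hw).2 h
  have h_abs : |z| ≤ z ^ 2 := Int.natCast_natAbs z ▸ Int.natAbs_le_self_sq z
  have : (|z| : ℝ) ≤ ⌈C / w⌉ := by
    calc (|z| : ℝ) ≤ (z : ℝ) ^ 2 := by exact_mod_cast h_abs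
      _ ≤ C / w := h_sq
      _ ≤ ⌈C / w⌉ := Int.le_ceil _
  exact_mod_cast this

theorem finite_setOf_sum_sq_mul_le {ι : Type*} [Fintype ι] [DecidableEq ι] {w : ι → ℝ}
    (hw : ∀ k, 0 < w k) (C : ℝ) :
    {y : ι → ℤ | ∑ k, (y k : ℝ) ^ 2 * w k ≤ C}.Finite := by
  refine (Set.finite_Icc (fun k => -⌈C / w k⌉) fun k => ⌈C / w k⌉).subset fun y hy => ?_
  have h_abs k : |y k| ≤ ⌈C / w k⌉ := abs_le_ceil_of_sq_mul_le (hw k) <|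
    (single_le_sum (f := fun j => (y j : ℝ) ^ 2 * w j)
      (fun j _ => mul_nonneg (sq_nonneg _) (hw j).le) (mem_univ k)).trans hy
  exact ⟨fun k => (abs_le.1 (h_abs k)).1, fun k => (abs_le.1 (h_abs k)).2⟩

theorem ncard_setOf_sum_sq_mul_le_of_unitriangular {ι : Type*} [Fintype ι] [LinearOrder ι]
    (M : ι → ι → ℝ) (h_diag : ∀ k, M k k = 1) (h_lt : ∀ j k, j < k → M j k = 0)
    {w : ι → ℝ} (hw : ∀ k, 0 < w k) (A : ℝ) :
    {x : ι → ℤ | ∑ k, (∑ j, (x j : ℝ) * M j k) ^ 2 * w k ≤ A}.ncard ≤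
      {y : ι → ℤ | ∑ k, (y k : ℝ) ^ 2 * w k ≤ 4 * A}.ncard := by
  refine Set.ncard_le_ncard_of_injOn _ (fun x hx => ?_)
    (injective_round_sum_mul_of_unitriangular M h_diag h_lt).injOn
    (finite_setOf_sum_sq_mul_le hw _)
  calc ∑ k, ((round (∑ j, (x j : ℝ) * M j k) : ℤ) : ℝ) ^ 2 * w k
      ≤ ∑ k, 4 * (∑ j, (x j : ℝ) * M j k) ^ 2 * w k :=
        sum_le_sum fun k _ => mul_le_mul_of_nonneg_right (sq_round_le _) (hw k).le
    _ = 4 * ∑ k, (∑ j, (x j : ℝ) * M j k) ^ 2 * w k := by simp only [mul_sum, mul_assoc]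
    _ ≤ 4 * A := by linarith [hx.out]

theorem norm_sum_smul_sq_of_pairwise_inner_eq_zero {ι F : Type*} [Fintype ι]
    [NormedAddCommGroup F] [InnerProductSpace ℝ F] {v : ι → F}
    (hv : Pairwise fun j k => inner ℝ (v j) (v k) = 0) (c : ι → ℝ) :
    ‖∑ k, c k • v k‖ ^ 2 = ∑ k, c k ^ 2 * ‖v k‖ ^ 2 := by
  rw [← real_inner_self_eq_norm_sq, sum_inner]
  refine sum_congr rfl fun k _ => ?_
  rw [inner_sum, sum_eq_single k (fun j _ hjk => by simp [real_inner_smul_left,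
      real_inner_smul_right, hv hjk.symm]) (by simp),
    real_inner_smul_left, real_inner_smul_right, real_inner_self_eq_norm_sq]
  ring

section GramSchmidt

variable {d n : ℕ} (b : Fin d → EuclideanSpace ℝ (Fin n))

theorem gso_pairwise_orthogonal : Pairwise fun j k => inner ℝ (gso b j) (gso b k) = 0 :=
  InnerProductSpace.gramSchmidt_pairwise_orthogonal ℝ b

theorem gso_ne_zero (hb : LinearIndependent ℝ b) (j : Fin d) : gso b j ≠ 0 :=
  InnerProductSpace.gramSchmidt_ne_zero j hb

theorem gso_add_sum_gsoMu_smul (j : Fin d) :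
    gso b j + ∑ k ∈ Iio j, gsoMu b j k • gso b k = b j := by
  simpa [gso, gsoMu] using (InnerProductSpace.gramSchmidt_def'' ℝ b j).symm

theorem gsoMu_of_lt {j k : Fin d} (h : j < k) : gsoMu b j k = 0 := by
  rw [gsoMu, gso, InnerProductSpace.gramSchmidt_inv_triangular ℝ b h, zero_div]

theorem gsoMu_self (hb : LinearIndependent ℝ b) (j : Fin d) : gsoMu b j j = 1 := by
  have h_inner : inner ℝ (gso b j) (b j) = ‖gso b j‖ ^ 2 := by
    rw [← gso_add_sum_gsoMu_smul b j, inner_add_right, inner_sum, real_inner_self_eq_norm_sq,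
      sum_eq_zero fun k hk => by
        rw [real_inner_smul_right, gso_pairwise_orthogonal b (mem_Iio.1 hk).ne', mul_zero],
      add_zero]
  rw [gsoMu, h_inner, div_self (pow_ne_zero 2 (norm_ne_zero_iff.2 (gso_ne_zero b hb j)))]

theorem sum_gsoMu_smul_gso (hb : LinearIndependent ℝ b) (j : Fin d) :
    ∑ k, gsoMu b j k • gso b k = b j := by
  rw [← sum_subset (subset_univ (Iic j)) fun k _ hk => by
      rw [gsoMu_of_lt b (not_le.1 (by simpa using hk)), zero_smul],
    ← Iio_insert, sum_insert (by simp), gsoMu_self b hb, one_smul, gso_add_sum_gsoMu_smul]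

theorem sub_sum_filter_lt_gsoMu_smul_gso (hb : LinearIndependent ℝ b) (i j : Fin d) :
    b j - ∑ k ∈ univ.filter (· < i), gsoMu b j k • gso b k =
      ∑ k : {k : Fin d // i ≤ k}, gsoMu b j k • gso b k := by
  rw [sub_eq_iff_eq_add', ← sum_gsoMu_smul_gso b hb j,
    ← sum_filter_add_sum_filter_not univ (· < i)]
  congr 1
  exact sum_subtype _ (fun k => by simp) _

theorem norm_sum_smul_sub_sum_filter_lt_gsoMu_smul_gso_sq (hb : LinearIndependent ℝ b) (i : Fin d)
    (x : {j : Fin d // i ≤ j} → ℝ) :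
    ‖∑ j, x j • (b j - ∑ k ∈ univ.filter (· < i), gsoMu b j k • gso b k)‖ ^ 2 =
      ∑ k : {k : Fin d // i ≤ k}, (∑ j, x j * gsoMu b j k) ^ 2 * ‖gso b k‖ ^ 2 := by
  simp_rw [sub_sum_filter_lt_gsoMu_smul_gso b hb i, smul_sum, smul_smul]
  rw [sum_comm]
  simp_rw [← sum_smul]
  exact norm_sum_smul_sq_of_pairwise_inner_eq_zero
    (fun j k hjk => gso_pairwise_orthogonal b (Subtype.coe_injective.ne hjk)) _

end GramSchmidt

theorem enum_count_le_general (d n : ℕ) (b : Fin d → EuclideanSpace ℝ (Fin n))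
    (hb : LinearIndependent ℝ b) (A : ℝ) (i : Fin d) :
    Set.ncard {x : {j : Fin d // i ≤ j} → ℤ |
        ‖∑ j, (x j : ℝ) •
            (b j.1 - ∑ k ∈ Finset.univ.filter (fun k : Fin d => k < i),
              gsoMu b j.1 k • gso b k)‖ ^ 2 ≤ A} ≤
      Set.ncard {x : {j : Fin d // i ≤ j} → ℤ |
        ∑ j, (x j : ℝ) ^ 2 * ‖gso b j.1‖ ^ 2 ≤ 4 * A} := by
  simp_rw [norm_sum_smul_sub_sum_filter_lt_gsoMu_smul_gso_sq b hb i]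
  exact ncard_setOf_sum_sq_mul_le_of_unitriangular
    (fun j k : {j : Fin d // i ≤ j} => gsoMu b j k) (fun k => gsoMu_self b hb k)
    (fun j k hjk => gsoMu_of_lt b hjk)
    (fun k => pow_pos (norm_pos_iff.2 (gso_ne_zero b hb k)) 2) A

/-- The number of integer tuples `(x_i, …, x_d)` such that the projected
combination `∑_{j ≥ i} x_j b_j^{(i)}` (where `b_j^{(i)} = b_j - ∑_{k<i} μ_{j,k} b_k^*`
is the projection of `b_j` orthogonally to `span(b_1, …, b_{i-1})`) has squared
norm at most `A` is at most the number of integer tuples `(x_i, …, x_d)` with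
`∑_{j ≥ i} x_j² ‖b_j^*‖² ≤ 4A`. -/
theorem enum_count_le (d n : ℕ) (b : Fin d → EuclideanSpace ℝ (Fin n))
    (hb : LinearIndependent ℝ b) (A : ℝ) (hA : 0 < A) (i : Fin d) :
    Set.ncard {x : {j : Fin d // i ≤ j} → ℤ |
        ‖∑ j, (x j : ℝ) •
            (b j.1 - ∑ k ∈ Finset.univ.filter (fun k : Fin d => k < i),
              gsoMu b j.1 k • gso b k)‖ ^ 2 ≤ A} ≤
      Set.ncard {x : {j : Fin d // i ≤ j} → ℤ |
        ∑ j, (x j : ℝ) ^ 2 * ‖gso b j.1‖ ^ 2 ≤ 4 * A} :=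
  enum_count_le_general d n b hb A i
end

section
/- Let d ≥ 1, A > 0, and positive reals c_i = ‖b_i^*‖ for i ≤ i_0 ≤ d. Then the number N of integer points in the ellipsoid {(y_{i_0},…,y_d) ∈ ℝ^{d-i_0+1} : ∑_{j≥i_0} y_j² c_j² ≤ 4A} satisfies N ≤ (4e(1+√π))^d · ∏_{j≥i_0} max(1, √A/(√d·c_j)). -/
open Finset Real

/-!
Rankin's trick: on the ellipsoid `∑ⱼ yⱼ² cⱼ² ≤ 4A` the weight `exp (d (1 - ∑ⱼ yⱼ² cⱼ² / (4A)))` is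
at least `1`, and summed over all of `ℤ^I` it factors into the one-dimensional theta sums
`Θ(tⱼ) = ∑_{n ∈ ℤ} exp (-tⱼ n²)` with `tⱼ = d cⱼ² / (4A)`. Comparing `Θ(t)` with the Gaussian
integral gives `Θ(t) ≤ 1 + √(π / t) ≤ (1 + √π) max 1 (1 / √t)`.
-/

namespace Real

theorem sum_range_exp_neg_mul_sq_succ_le {t : ℝ} (ht : 0 < t) (N : ℕ) :
    ∑ n ∈ range N, exp (-t * ((n : ℝ) + 1) ^ 2) ≤ √(π / t) / 2 := by
  rw [← integral_gaussian_Ioi]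
  have hanti : AntitoneOn (fun x : ℝ => exp (-t * x ^ 2)) (Set.Icc 0 N) := fun x hx y _ hxy =>
    exp_le_exp.mpr (by nlinarith [mul_le_mul hxy hxy hx.1 (hx.1.trans hxy)])
  exact_mod_cast hanti.sum_range_le_integral (integrable_exp_neg_mul_sq ht).integrableOn
    fun _ _ => (exp_pos _).le

theorem tsum_exp_neg_mul_int_sq_le {t : ℝ} (ht : 0 < t) :
    Summable (fun n : ℤ => exp (-t * (n : ℝ) ^ 2)) ∧
      ∑' n : ℤ, exp (-t * (n : ℝ) ^ 2) ≤ 1 + √(π / t) := by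
  set f : ℤ → ℝ := fun n => exp (-t * (n : ℝ) ^ 2)
  have hshift : (fun n : ℕ => f (n + 1)) = fun n : ℕ => exp (-t * ((n : ℝ) + 1) ^ 2) := by
    ext n; simp [f]
  have hneg : (fun n : ℕ => f (-(n + 1))) = fun n : ℕ => f (n + 1) := by
    ext n; simp only [f, Int.cast_neg, neg_sq]
  have hsucc : Summable fun n : ℕ => f (n + 1) := hshift ▸
    summable_of_sum_range_le (fun _ => (exp_pos _).le) (sum_range_exp_neg_mul_sq_succ_le ht)
  have htail : ∑' n : ℕ, f (n + 1) ≤ √(π / t) / 2 := hshift ▸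
    tsum_le_of_sum_range_le (fun _ => (exp_pos _).le) (sum_range_exp_neg_mul_sq_succ_le ht)
  have hnat : Summable fun n : ℕ => f n := (summable_nat_add_iff 1).mp (by exact_mod_cast hsucc)
  refine ⟨.of_nat_of_neg_add_one hnat (hneg ▸ hsucc), ?_⟩
  rw [tsum_of_nat_of_neg_add_one hnat (hneg ▸ hsucc), hneg, hnat.tsum_eq_zero_add]
  have hf0 : f 0 = 1 := by simp [f]
  push_cast at htail ⊢
  linarith

theorem tsum_exp_neg_mul_int_sq_le_max {t : ℝ} (ht : 0 < t) :
    ∑' n : ℤ, exp (-t * (n : ℝ) ^ 2) ≤ (1 + √π) * max 1 (1 / √t) := by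
  have hsqrt : √(π / t) = √π * (1 / √t) := by rw [sqrt_div' _ ht.le, mul_one_div]
  calc ∑' n : ℤ, exp (-t * (n : ℝ) ^ 2) ≤ 1 + √π * (1 / √t) :=
        hsqrt ▸ (tsum_exp_neg_mul_int_sq_le ht).2
    _ ≤ max 1 (1 / √t) + √π * max 1 (1 / √t) := by gcongr <;> simp
    _ = (1 + √π) * max 1 (1 / √t) := by ring

theorem tsum_exp_neg_mul_int_sq_mul_sq_le {D A c : ℝ} (hD : 0 < D) (hA : 0 < A)
    (hc : 0 < c) :
    Summable (fun n : ℤ => exp (-(D / (4 * A)) * ((n : ℝ) ^ 2 * c ^ 2))) ∧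
      ∑' n : ℤ, exp (-(D / (4 * A)) * ((n : ℝ) ^ 2 * c ^ 2)) ≤
        2 * (1 + √π) * max 1 (√A / (√D * c)) := by
  have hsq : D / (4 * A) * c ^ 2 = (√D * c / (2 * √A)) ^ 2 := by
    rw [div_pow, mul_pow, mul_pow, sq_sqrt hD.le, sq_sqrt hA.le]; ring
  have ht : 0 < (√D * c / (2 * √A)) ^ 2 := by positivity
  have hrw : (fun n : ℤ => exp (-(D / (4 * A)) * ((n : ℝ) ^ 2 * c ^ 2))) =
      fun n : ℤ => exp (-(√D * c / (2 * √A)) ^ 2 * (n : ℝ) ^ 2) := by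
    ext n; rw [← hsq]; ring_nf
  have hinv : 1 / √((√D * c / (2 * √A)) ^ 2) = 2 * (√A / (√D * c)) := by
    rw [sqrt_sq (by positivity)]; field_simp
  rw [hrw]
  refine ⟨(tsum_exp_neg_mul_int_sq_le ht).1, ?_⟩
  calc _ ≤ (1 + √π) * max 1 (2 * (√A / (√D * c))) := hinv ▸ tsum_exp_neg_mul_int_sq_le_max ht
    _ ≤ (1 + √π) * (2 * max 1 (√A / (√D * c))) := by
        gcongr
        exact max_le (by linarith [le_max_left 1 (√A / (√D * c))])
          (by gcongr; exact le_max_right _ _)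
    _ = 2 * (1 + √π) * max 1 (√A / (√D * c)) := by ring

end Real

theorem Finset.sum_prod_apply_le_prod_tsum {ι κ : Type*} [Fintype ι] (T : Finset (ι → κ))
    {w : ι → κ → ℝ} (hw : ∀ i k, 0 ≤ w i k) (hsum : ∀ i, Summable (w i)) :
    ∑ x ∈ T, ∏ i, w i (x i) ≤ ∏ i, ∑' k, w i k := by
  classical
  have hT : T ⊆ Fintype.piFinset fun i => T.image (· i) := fun x hx =>
    Fintype.mem_piFinset.mpr fun i => mem_image_of_mem _ hx
  calc ∑ x ∈ T, ∏ i, w i (x i)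
      ≤ ∑ x ∈ Fintype.piFinset (fun i => T.image (· i)), ∏ i, w i (x i) :=
        sum_le_sum_of_subset_of_nonneg hT fun x _ _ => prod_nonneg fun i _ => hw i (x i)
    _ = ∏ i, ∑ k ∈ T.image (· i), w i k := (prod_univ_sum _ _).symm
    _ ≤ ∏ i, ∑' k, w i k := prod_le_prod (fun i _ => sum_nonneg fun k _ => hw i k)
        fun i _ => (hsum i).sum_le_tsum _ fun k _ => hw i k

theorem ncard_sum_le_le_exp_mul_prod_tsum {ι κ : Type*} [Fintype ι] (q : ι → κ → ℝ)
    {R s : ℝ} (hs : 0 ≤ s) (hsum : ∀ i, Summable fun k => exp (-s * q i k)) :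
    ({x : ι → κ | ∑ i, q i (x i) ≤ R}.ncard : ℝ) ≤
      exp (s * R) * ∏ i, ∑' k, exp (-s * q i k) := by
  set S := {x : ι → κ | ∑ i, q i (x i) ≤ R}
  have hRHS : 0 ≤ exp (s * R) * ∏ i, ∑' k, exp (-s * q i k) :=
    mul_nonneg (exp_pos _).le (prod_nonneg fun i _ => tsum_nonneg fun _ => (exp_pos _).le)
  rcases S.finite_or_infinite with hfin | hinf
  swap
  · rwa [hinf.ncard, Nat.cast_zero]
  have hweight : ∀ x ∈ S, 1 ≤ exp (s * R) * ∏ i, exp (-s * q i (x i)) := fun x hx => by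
    rw [← exp_sum, ← exp_add, one_le_exp_iff, ← mul_sum]
    linarith [mul_le_mul_of_nonneg_left (show ∑ i, q i (x i) ≤ R from hx) hs]
  calc (S.ncard : ℝ) = ∑ _x ∈ hfin.toFinset, (1 : ℝ) := by
        rw [Set.ncard_eq_toFinset_card S hfin, sum_const, nsmul_one]
    _ ≤ ∑ x ∈ hfin.toFinset, exp (s * R) * ∏ i, exp (-s * q i (x i)) :=
        sum_le_sum fun x hx => hweight x (hfin.mem_toFinset.mp hx)
    _ ≤ exp (s * R) * ∏ i, ∑' k, exp (-s * q i k) := by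
        rw [← mul_sum]
        exact mul_le_mul_of_nonneg_left (hfin.toFinset.sum_prod_apply_le_prod_tsum
          (fun _ _ => (exp_pos _).le) hsum) (exp_pos _).le

theorem ellipsoid_int_points_bound_general (d i₀ : ℕ) (hd : 1 ≤ d) (hi₀1 : 1 ≤ i₀)
    (A : ℝ) (hA : 0 < A) (c : ℕ → ℝ)
    (hc : ∀ j ∈ Finset.Icc i₀ d, 0 < c j) :
    (Set.ncard {x : {j : ℕ // j ∈ Finset.Icc i₀ d} → ℤ |
        ∑ j, (x j : ℝ) ^ 2 * c j.1 ^ 2 ≤ 4 * A} : ℝ) ≤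
      (4 * Real.exp 1 * (1 + Real.sqrt π)) ^ d *
        ∏ j ∈ Finset.Icc i₀ d, max 1 (Real.sqrt A / (Real.sqrt d * c j)) := by
  set m : ℕ → ℝ := fun j => max 1 (√A / (√d * c j))
  have hcoord (j : Icc i₀ d) := Real.tsum_exp_neg_mul_int_sq_mul_sq_le
    (D := d) (by exact_mod_cast hd) hA (hc j j.2)
  have hcard : Fintype.card (Icc i₀ d) ≤ d := by simp only [Fintype.card_coe, Nat.card_Icc]; omega
  have hbase : 1 ≤ 2 * (1 + √π) := by nlinarith [sqrt_nonneg π]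
  calc _ ≤ exp (d / (4 * A) * (4 * A)) * ∏ j : Icc i₀ d,
          ∑' n : ℤ, exp (-(d / (4 * A)) * ((n : ℝ) ^ 2 * c j ^ 2)) :=
        ncard_sum_le_le_exp_mul_prod_tsum (fun (j : Icc i₀ d) (n : ℤ) => (n : ℝ) ^ 2 * c j ^ 2)
          (by positivity) fun j => (hcoord j).1
    _ ≤ exp d * ∏ j : Icc i₀ d, (2 * (1 + √π) * m j) := by
        rw [div_mul_cancel₀ _ (by positivity)]
        gcongr with j
        exact (hcoord j).2
    _ = exp 1 ^ d * ((2 * (1 + √π)) ^ Fintype.card (Icc i₀ d) * ∏ j ∈ Icc i₀ d, m j) := by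
        rw [prod_mul_distrib, prod_const, card_univ, prod_coe_sort, ← exp_nat_mul, mul_one]
    _ ≤ exp 1 ^ d * ((2 * (2 * (1 + √π))) ^ d * ∏ j ∈ Icc i₀ d, m j) := by
        have hm : 0 ≤ ∏ j ∈ Icc i₀ d, m j :=
          prod_nonneg fun j _ => zero_le_one.trans (le_max_left _ _)
        gcongr
        calc _ ≤ (2 * (1 + √π)) ^ d := pow_le_pow_right₀ hbase hcard
          _ ≤ _ := by gcongr; linarith
    _ = _ := by rw [← mul_assoc, ← mul_pow]; congr 2; ring

/-- The number of integer points in the ellipsoid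
`{(y_{i₀},…,y_d) : ∑_j y_j² c_j² ≤ 4A}` is at most
`(4e(1+√π))^d · ∏_j max(1, √A/(√d c_j))`, where `c_j = ‖b_j^*‖ > 0`. -/
theorem ellipsoid_int_points_bound (d i₀ : ℕ) (hd : 1 ≤ d) (hi₀1 : 1 ≤ i₀)
    (hi₀ : i₀ ≤ d) (A : ℝ) (hA : 0 < A) (c : ℕ → ℝ)
    (hc : ∀ j ∈ Finset.Icc i₀ d, 0 < c j) :
    (Set.ncard {x : {j : ℕ // j ∈ Finset.Icc i₀ d} → ℤ |
        ∑ j, (x j : ℝ) ^ 2 * c j.1 ^ 2 ≤ 4 * A} : ℝ) ≤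
      (4 * Real.exp 1 * (1 + Real.sqrt π)) ^ d *
        ∏ j ∈ Finset.Icc i₀ d, max 1 (Real.sqrt A / (Real.sqrt d * c j)) :=
  ellipsoid_int_points_bound_general d i₀ hd hi₀1 A hA c hc
end
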